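/- arXiv:2207.12832 — 4 statements merged into one kernel-verified Lean document; each statement's English description precedes it below -/
import Mathlib

section
/- Let γ_Z > 1, b ≥ 0, τ_Z > b, e_Z > 0, and let r(τ) be the internal energy along the Hugoniot shock curve through (τ_Z, e_Z) for the covolume EOS (as in the extended Riemann problem). Define ς(τ) := r(τ)(τ - b)^{γ_Z - 1} on (τ_Z^∞, τ_Z], where τ_Z^∞ = ((γ_Z-1)τ_Z + 2b)/(γ_Z+1). Then for every γ ∈ (1, γ_Z] and every c ∈ (0, e_Z(τ_Z - b)^{γ-1}], the function g(τ) := τ^{-1} r(τ) - c τ^{-1}(τ - b)^{1-γ} is nonnegative and decreasing on (τ_Z^∞, τ_Z], given that ς is decreasing on this interval. -/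
/-!
Since `τZ∞ > b`, every `τ` in the interval has `τ > b`, and there `g` factors as
`g τ = τ⁻¹ (τ - b)^(1-γ) · (ς τ (τ - b)^(γ-γZ) - c)`.
Both factors are antitone: the first because `τ⁻¹` and `(τ - b)^(1-γ)` are, the second because
`ς` is antitone and positive and `γ ≤ γZ`. The second factor is nonnegative since at its
minimum point `τZ` it equals `eZ (τZ - b)^(γ-1) - c ≥ 0`, and a product of nonnegative antitone
functions is nonnegative and antitone.
-/

open Set Real

lemma AntitoneOn.mul_of_nonneg {α M₀ : Type*} [Preorder α] [Mul M₀] [Zero M₀] [Preorder M₀]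
    [PosMulMono M₀] [MulPosMono M₀] {f g : α → M₀} {s : Set α}
    (hf : AntitoneOn f s) (hg : AntitoneOn g s)
    (hf₀ : ∀ x ∈ s, 0 ≤ f x) (hg₀ : ∀ x ∈ s, 0 ≤ g x) : AntitoneOn (f * g) s :=
  fun _ ha _ hb h ↦ mul_le_mul (hf ha hb h) (hg ha hb h) (hg₀ _ hb) (hf₀ _ ha)

section Covolume

variable {b p : ℝ}

lemma antitoneOn_rpow_sub (b : ℝ) (hp : p ≤ 0) : AntitoneOn (fun τ ↦ (τ - b) ^ p) (Ioi b) :=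
  fun _ hx _ _ hxy ↦ rpow_le_rpow_of_nonpos (sub_pos.2 hx) (by linarith) hp

lemma antitoneOn_inv_mul_rpow_sub (hb : 0 ≤ b) (hp : p ≤ 0) :
    AntitoneOn (fun τ ↦ τ⁻¹ * (τ - b) ^ p) (Ioi b) :=
  (antitoneOn_inv_pos.mono fun _ hτ ↦ hb.trans_lt hτ).mul_of_nonneg (antitoneOn_rpow_sub b hp)
    (fun _ hτ ↦ inv_nonneg.2 (hb.trans (le_of_lt hτ)))
    (fun _ hτ ↦ rpow_nonneg (sub_pos.2 hτ).le p)

lemma AntitoneOn.mul_rpow_sub {ς : ℝ → ℝ} {s : Set ℝ} (hς : AntitoneOn ς s) (hs : s ⊆ Ioi b)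
    (hς₀ : ∀ τ ∈ s, 0 ≤ ς τ) (hp : p ≤ 0) : AntitoneOn (fun τ ↦ ς τ * (τ - b) ^ p) s :=
  hς.mul_of_nonneg ((antitoneOn_rpow_sub b hp).mono hs) hς₀
    fun _ hτ ↦ rpow_nonneg (sub_pos.2 (hs hτ)).le p

lemma inv_mul_sub_eq_inv_mul_rpow_mul {τ : ℝ} (hτ : b < τ) (x c γ γZ : ℝ) :
    τ⁻¹ * x - c * τ⁻¹ * (τ - b) ^ (1 - γ) =
      τ⁻¹ * (τ - b) ^ (1 - γ) * (x * (τ - b) ^ (γZ - 1) * (τ - b) ^ (γ - γZ) - c) := by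
  have hτb : 0 < τ - b := sub_pos.2 hτ
  have hγ : (τ - b) ^ (1 - γ) * (τ - b) ^ (γ - 1) = 1 := by
    rw [← rpow_add hτb]; norm_num
  have hγZ : (τ - b) ^ (γZ - 1) * (τ - b) ^ (γ - γZ) = (τ - b) ^ (γ - 1) := by
    rw [← rpow_add hτb]; ring_nf
  linear_combination (-(τ⁻¹ * x)) * hγ - (τ⁻¹ * x * (τ - b) ^ (1 - γ)) * hγZ

lemma nonneg_and_antitoneOn_inv_mul_rpow_mul {ς : ℝ → ℝ} {s : Set ℝ} {τ₀ q c : ℝ}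
    (hb : 0 ≤ b) (hs : s ⊆ Ioi b) (hτ₀ : IsGreatest s τ₀) (hς : AntitoneOn ς s)
    (hς₀ : ∀ τ ∈ s, 0 ≤ ς τ) (hp : p ≤ 0) (hq : q ≤ 0) (hc : c ≤ ς τ₀ * (τ₀ - b) ^ p) :
    (∀ τ ∈ s, 0 ≤ τ⁻¹ * (τ - b) ^ q * (ς τ * (τ - b) ^ p - c)) ∧
      AntitoneOn (fun τ ↦ τ⁻¹ * (τ - b) ^ q * (ς τ * (τ - b) ^ p - c)) s := by
  have hB := hς.mul_rpow_sub hs hς₀ hp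
  have hA₀ : ∀ τ ∈ s, 0 ≤ τ⁻¹ * (τ - b) ^ q := fun τ hτ ↦
    mul_nonneg (inv_nonneg.2 (hb.trans (le_of_lt (hs hτ)))) (rpow_nonneg (sub_pos.2 (hs hτ)).le q)
  have hB₀ : ∀ τ ∈ s, 0 ≤ ς τ * (τ - b) ^ p - c := fun τ hτ ↦
    sub_nonneg.2 (hc.trans (hB hτ hτ₀.1 (hτ₀.2 hτ)))
  refine ⟨fun τ hτ ↦ mul_nonneg (hA₀ τ hτ) (hB₀ τ hτ), ?_⟩
  exact ((antitoneOn_inv_mul_rpow_sub hb hq).mono hs).mul_of_nonneg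
    (fun _ hx _ hy hxy ↦ sub_le_sub_right (hB hx hy hxy) c) hA₀ hB₀

end Covolume

lemma lt_maxCompression {γZ b τZ : ℝ} (hγZ : 1 < γZ) (hτ : b < τZ) :
    b < ((γZ - 1) * τZ + 2 * b) / (γZ + 1) := by
  rw [lt_div_iff₀ (by linarith)]
  nlinarith

lemma maxCompression_lt {γZ b τZ : ℝ} (hγZ : 1 < γZ) (hτ : b < τZ) :
    ((γZ - 1) * τZ + 2 * b) / (γZ + 1) < τZ := by
  rw [div_lt_iff₀ (by linarith)]
  linarith

/-- Given that `ς(τ) = r(τ)(τ-b)^{γZ-1}` is decreasing on `(τZ∞, τZ]`,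
the surrogate-entropy function `g(τ) = τ⁻¹ r(τ) - c τ⁻¹ (τ-b)^{1-γ}` is
nonnegative and decreasing on `(τZ∞, τZ]` for every `γ ∈ (1, γZ]` and
`c ∈ (0, eZ (τZ-b)^{γ-1}]`. -/
theorem stmt2 (γZ b τZ eZ : ℝ) (hγZ : 1 < γZ) (hb : 0 ≤ b) (hτ : b < τZ)
    (he : 0 < eZ)
    (r : ℝ → ℝ)
    (hr : ∀ τ, r τ = eZ * (1 - (γZ - 1) * (τ - τZ) / (2 * (τZ - b))) /
      (1 + (γZ - 1) * (τ - τZ) / (2 * (τ - b))))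
    (τZinf : ℝ) (hinf : τZinf = ((γZ - 1) * τZ + 2 * b) / (γZ + 1))
    (ς : ℝ → ℝ) (hς : ∀ τ, ς τ = r τ * (τ - b) ^ (γZ - 1))
    (hanti : AntitoneOn ς (Set.Ioc τZinf τZ))
    (γ c : ℝ) (hγ : γ ∈ Set.Ioc 1 γZ)
    (hc : c ∈ Set.Ioc 0 (eZ * (τZ - b) ^ (γ - 1)))
    (g : ℝ → ℝ)
    (hg : ∀ τ, g τ = τ⁻¹ * r τ - c * τ⁻¹ * (τ - b) ^ (1 - γ)) :
    (∀ τ ∈ Set.Ioc τZinf τZ, 0 ≤ g τ) ∧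
    AntitoneOn g (Set.Ioc τZinf τZ) := by
  have hs : Ioc τZinf τZ ⊆ Ioi b :=
    Ioc_subset_Ioi_self.trans (Ioi_subset_Ioi (hinf ▸ lt_maxCompression hγZ hτ).le)
  have hτZ : IsGreatest (Ioc τZinf τZ) τZ := isGreatest_Ioc (hinf ▸ maxCompression_lt hγZ hτ)
  have hςτZ : ς τZ = eZ * (τZ - b) ^ (γZ - 1) := by simp [hς, hr]
  have hςτZ_pos : 0 < ς τZ := hςτZ ▸ mul_pos he (rpow_pos_of_pos (sub_pos.2 hτ) _)
  have hς₀ : ∀ τ ∈ Ioc τZinf τZ, 0 ≤ ς τ := fun τ hτ' ↦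
    hςτZ_pos.le.trans (hanti hτ' hτZ.1 hτ'.2)
  have hcς : c ≤ ς τZ * (τZ - b) ^ (γ - γZ) := by
    rw [hςτZ, mul_assoc, ← rpow_add (sub_pos.2 hτ), sub_add_sub_cancel']
    exact hc.2
  have hg_eq : EqOn g (fun τ ↦ τ⁻¹ * (τ - b) ^ (1 - γ) * (ς τ * (τ - b) ^ (γ - γZ) - c))
      (Ioc τZinf τZ) := fun τ hτ' ↦ by
    dsimp only
    rw [hg, hς, inv_mul_sub_eq_inv_mul_rpow_mul (hs hτ')]
  obtain ⟨hnonneg, hmono⟩ := nonneg_and_antitoneOn_inv_mul_rpow_mul hb hs hτZ hanti hς₀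
    (sub_nonpos.2 hγ.2) (sub_nonpos.2 hγ.1.le) hcς
  exact ⟨fun τ hτ' ↦ hg_eq hτ' ▸ hnonneg τ hτ', hg_eq.congr_antitoneOn.2 hmono⟩
end

section
/- Fix γ > 1, b ≥ 0, and c ≥ 0. The function Ψ defined on the set B(b) = {(ρ, m, E) ∈ ℝ^{d+2} : 0 < ρ, 1 - bρ > 0} by Ψ(ρ, m, E) := (E - ‖m‖²/(2ρ)) - c ρ^γ (1 - bρ)^{1-γ} is concave. -/
/-!
Both subtracted terms are perspectives `t f(x / t)` of convex functions, composed with affine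
maps: `‖m‖² / (2ρ) = ρ f(m / ρ)` with `f = ‖·‖² / 2`, and `ρ ^ γ s ^ (1 - γ) = s (ρ / s) ^ γ` with
`s = 1 - bρ`, where `x ↦ x ^ γ` is convex on `[0, ∞)` since `γ ≥ 1`. The perspective of a convex
function is jointly convex, because `(a x + b y) / (a t + b u)` is the convex combination of
`x / t` and `y / u` with weights `a t / (a t + b u)` and `b u / (a t + b u)`.
-/

open Set

lemma add_mul_pos_of_convex_weights {a b x y : ℝ} (hx : 0 < x) (hy : 0 < y) (ha : 0 ≤ a)
    (hb : 0 ≤ b) (hab : a + b = 1) : 0 < a * x + b * y := by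
  rcases ha.eq_or_lt with rfl | ha
  · simp_all
  · positivity

theorem ConvexOn.perspective {E : Type*} [AddCommGroup E] [Module ℝ E] {s : Set E} {f : E → ℝ}
    (hf : ConvexOn ℝ s f) :
    ConvexOn ℝ {p : ℝ × E | 0 < p.1 ∧ p.1⁻¹ • p.2 ∈ s} (fun p => p.1 * f (p.1⁻¹ • p.2)) := by
  have combo : ∀ ⦃p q : ℝ × E⦄, 0 < p.1 → 0 < q.1 → ∀ ⦃a b : ℝ⦄, 0 ≤ a → 0 ≤ b → a + b = 1 →
      0 < (a • p + b • q).1 ∧ 0 ≤ a * p.1 / (a • p + b • q).1 ∧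
      0 ≤ b * q.1 / (a • p + b • q).1 ∧
      a * p.1 / (a • p + b • q).1 + b * q.1 / (a • p + b • q).1 = 1 ∧
      (a • p + b • q).1⁻¹ • (a • p + b • q).2 =
        (a * p.1 / (a • p + b • q).1) • (p.1⁻¹ • p.2) +
        (b * q.1 / (a • p + b • q).1) • (q.1⁻¹ • q.2) := by
    intro p q hp hq a b ha hb hab
    have ht := add_mul_pos_of_convex_weights hp hq ha hb hab
    simp only [Prod.fst_add, Prod.smul_fst, Prod.snd_add, Prod.smul_snd, smul_eq_mul, smul_smul,
      smul_add]
    refine ⟨ht, by positivity, by positivity, by field_simp, ?_⟩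
    congr 2 <;> field_simp
  refine ⟨fun p hp q hq a b ha hb hab => ?_, fun p hp q hq a b ha hb hab => ?_⟩
  · obtain ⟨ht, hw₁, hw₂, hw, hcombo⟩ := combo hp.1 hq.1 ha hb hab
    exact ⟨ht, hcombo ▸ hf.1 hp.2 hq.2 hw₁ hw₂ hw⟩
  · obtain ⟨ht, hw₁, hw₂, hw, hcombo⟩ := combo hp.1 hq.1 ha hb hab
    set t := (a • p + b • q).1
    calc t * f (t⁻¹ • (a • p + b • q).2)
        ≤ t * ((a * p.1 / t) • f (p.1⁻¹ • p.2) + (b * q.1 / t) • f (q.1⁻¹ • q.2)) := by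
          rw [hcombo]; exact mul_le_mul_of_nonneg_left (hf.2 hp.2 hq.2 hw₁ hw₂ hw) ht.le
      _ = a • (p.1 * f (p.1⁻¹ • p.2)) + b • (q.1 * f (q.1⁻¹ • q.2)) := by
          simp only [smul_eq_mul]; field_simp

lemma convexOn_sq_norm_div {E : Type*} [SeminormedAddCommGroup E] [NormedSpace ℝ E] :
    ConvexOn ℝ {p : ℝ × E | 0 < p.1} (fun p => ‖p.2‖ ^ 2 / (2 * p.1)) := by
  have hsq : ConvexOn ℝ univ (fun x : E => ‖x‖ ^ 2 / 2) :=
    ((convexOn_univ_norm.pow (fun x _ => norm_nonneg x) 2).smul (by norm_num : (0:ℝ) ≤ 1 / 2)).congr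
      (fun x _ => by simp only [Pi.pow_apply, smul_eq_mul]; ring)
  refine (hsq.perspective.subset (fun p hp => ⟨hp, trivial⟩) ?_).congr fun p (hp : 0 < p.1) => ?_
  · exact convex_halfSpace_gt (LinearMap.fst ℝ ℝ E).isLinear 0
  · simp only [norm_smul, norm_inv, Real.norm_of_nonneg hp.le]
    field_simp [hp.ne']

lemma convex_pos_one_sub_mul_pos (b : ℝ) : Convex ℝ {ρ : ℝ | 0 < ρ ∧ 0 < 1 - b * ρ} := by
  intro x hx y hy a c ha hc hac
  have hs := add_mul_pos_of_convex_weights hx.2 hy.2 ha hc hac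
  exact ⟨add_mul_pos_of_convex_weights hx.1 hy.1 ha hc hac, by
    simp only [smul_eq_mul]; linarith⟩

lemma convexOn_rpow_mul_one_sub_mul_rpow {γ : ℝ} (hγ : 1 ≤ γ) (b : ℝ) :
    ConvexOn ℝ {ρ : ℝ | 0 < ρ ∧ 0 < 1 - b * ρ} (fun ρ => ρ ^ γ * (1 - b * ρ) ^ (1 - γ)) := by
  set g : ℝ →ᵃ[ℝ] ℝ × ℝ := AffineMap.lineMap (1, 0) (1 - b, 1)
  have hg : ∀ ρ, g ρ = (1 - b * ρ, ρ) := fun ρ => by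
    ext
    · simp [g, AffineMap.lineMap_apply_module', mul_comm, sub_eq_neg_add]
    · simp [g, AffineMap.lineMap_apply_module]
  refine (((convexOn_rpow hγ).perspective.comp_affineMap g).subset (fun ρ hρ => ?_)
    (convex_pos_one_sub_mul_pos b)).congr fun ρ hρ => ?_
  · simp only [mem_preimage, hg, mem_ofPred_eq, mem_Ici, smul_eq_mul]
    exact ⟨hρ.2, mul_nonneg (inv_nonneg.2 hρ.2.le) hρ.1.le⟩
  · simp only [Function.comp_apply, hg, smul_eq_mul]
    rw [Real.mul_rpow (inv_nonneg.2 hρ.2.le) hρ.1.le, Real.inv_rpow hρ.2.le,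
      Real.rpow_sub hρ.2, Real.rpow_one]
    field_simp

theorem stmt3_general (d : ℕ) (γ b c : ℝ) (hγ : 1 < γ) (hc : 0 ≤ c) :
    ConcaveOn ℝ
      {u : ℝ × EuclideanSpace ℝ (Fin d) × ℝ | 0 < u.1 ∧ 0 < 1 - b * u.1}
      (fun u => (u.2.2 - ‖u.2.1‖ ^ 2 / (2 * u.1)) -
        c * u.1 ^ γ * (1 - b * u.1) ^ (1 - γ)) := by
  let V := EuclideanSpace ℝ (Fin d)
  have hpressure := ((convexOn_rpow_mul_one_sub_mul_rpow hγ.le b).comp_linearMap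
    (LinearMap.fst ℝ ℝ (V × ℝ))).smul hc
  have hkinetic := (convexOn_sq_norm_div.comp_linearMap
    ((LinearMap.fst ℝ ℝ (V × ℝ)).prod (LinearMap.fst ℝ V ℝ ∘ₗ LinearMap.snd ℝ ℝ (V × ℝ)))).subset
    (fun u hu => hu.1) hpressure.1
  have henergy := (LinearMap.snd ℝ V ℝ ∘ₗ LinearMap.snd ℝ ℝ (V × ℝ)).concaveOn hpressure.1
  exact ((henergy.sub hkinetic).sub hpressure).congr fun u _ => by
    simp only [Pi.sub_apply, Function.comp_apply, smul_eq_mul, mul_assoc]; rfl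

/-- The surrogate entropy functional
`Ψ(ρ,m,E) = (E - ‖m‖²/(2ρ)) - c ρ^γ (1-bρ)^{1-γ}` is concave on the
admissible set `B(b) = {(ρ,m,E) : 0 < ρ, 1 - bρ > 0}`. -/
theorem stmt3 (d : ℕ) (γ b c : ℝ) (hγ : 1 < γ) (hb : 0 ≤ b) (hc : 0 ≤ c) :
    ConcaveOn ℝ
      {u : ℝ × EuclideanSpace ℝ (Fin d) × ℝ | 0 < u.1 ∧ 0 < 1 - b * u.1}
      (fun u => (u.2.2 - ‖u.2.1‖ ^ 2 / (2 * u.1)) -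
        c * u.1 ^ γ * (1 - b * u.1) ^ (1 - γ)) :=
  stmt3_general d γ b c hγ hc
end

section
/- Let d ≥ 1, b ≥ 0, γ > 1, c real. Define Φ on A(b) := {(ρ, m, E) ∈ ℝ^{d+2} : 0 < ρ < 1/b} by Φ(ρ, m, E) := ρE - ‖m‖²/2 - c ρ^{γ+1}(1 - bρ)^{1-γ}. Let u ∈ A(b), p = (ρ_p, m_p, E_p) ∈ ℝ^{d+2}, and ℓ₀ > 0 with u + ℓ₀ p ∈ A(b). Then the function f(ℓ) := Φ(u + ℓ p) satisfies f'''(ℓ) = ρ_p³ · (-c γ(γ²-1) ρ(ℓ)^{γ-2}(1 - bρ(ℓ))^{-γ-2}) where ρ(ℓ) is the density of u + ℓp; in particular, if c ≥ 0, the sign of f''' is constant on [0, ℓ₀] (it equals the sign of -ρ_p when c > 0, γ > 1), so f'' is monotone on [0, ℓ₀]. -/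
/-!
Along the line `ℓ ↦ u + ℓ • p` the part `ρE - ‖m‖²/2` of `Φ` is a quadratic polynomial in `ℓ`,
so `f'''(ℓ) = -c ρ_p³ g'''(ρ(ℓ))` for `g(ρ) = ρ^(γ+1) (1 - bρ)^(1-γ)`, and `g'''` collapses to
`γ(γ² - 1) ρ^(γ-2) (1 - bρ)^(-γ-2)`. The admissible densities form an interval, hence `ρ(ℓ)` stays
admissible on `[0, ℓ₀]`; there `f'''` has the sign of `-ρ_p` when `c ≥ 0`, and `f''` is monotone
by the mean value theorem.
-/

open Real Set Filter RealInnerProductSpace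

theorem hasDerivAt_deriv_of_forall_hasDerivAt {𝕜 F : Type*} [NontriviallyNormedField 𝕜]
    [NormedAddCommGroup F] [NormedSpace 𝕜 F] {S : Set 𝕜} (hS : IsOpen S)
    {f f₁ : 𝕜 → F} {f₂ : F} {x : 𝕜} (hf : ∀ y ∈ S, HasDerivAt f (f₁ y) y)
    (hf₁ : HasDerivAt f₁ f₂ x) (hx : x ∈ S) : HasDerivAt (deriv f) f₂ x :=
  hf₁.congr_of_eventuallyEq <| eventually_of_mem (hS.mem_nhds hx) fun y hy => (hf y hy).deriv

theorem monotoneOn_or_antitoneOn_of_hasDerivAt {D : Set ℝ} (hD : Convex ℝ D) {f f' : ℝ → ℝ}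
    (hf : ∀ x ∈ D, HasDerivAt f (f' x) x)
    (hsign : (∀ x ∈ D, 0 ≤ f' x) ∨ ∀ x ∈ D, f' x ≤ 0) :
    MonotoneOn f D ∨ AntitoneOn f D := by
  have hcont : ContinuousOn f D := fun x hx => (hf x hx).continuousAt.continuousWithinAt
  have hderiv : ∀ x ∈ interior D, HasDerivWithinAt f (f' x) (interior D) x :=
    fun x hx => (hf x (interior_subset hx)).hasDerivWithinAt
  exact hsign.imp
    (fun h => monotoneOn_of_hasDerivWithinAt_nonneg hD hcont hderiv
      fun x hx => h x (interior_subset hx))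
    (fun h => antitoneOn_of_hasDerivWithinAt_nonpos hD hcont hderiv
      fun x hx => h x (interior_subset hx))

theorem forall_nonneg_or_forall_nonpos_pow_three_mul {D : Set ℝ} {K : ℝ → ℝ} (q : ℝ)
    (hK : ∀ x ∈ D, K x ≤ 0) : (∀ x ∈ D, 0 ≤ q ^ 3 * K x) ∨ ∀ x ∈ D, q ^ 3 * K x ≤ 0 := by
  rcases le_total 0 q with hq | hq
  · exact Or.inr fun x hx => mul_nonpos_of_nonneg_of_nonpos (pow_nonneg hq 3) (hK x hx)
  · exact Or.inl fun x hx =>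
      mul_nonneg_of_nonpos_of_nonpos (Odd.pow_nonpos (by decide) hq) (hK x hx)

theorem Convex.add_smul_mem_of_mem_Icc {E : Type*} [AddCommGroup E] [Module ℝ E] {s : Set E}
    (hs : Convex ℝ s) {x y : E} {ℓ₀ ℓ : ℝ} (hx : x ∈ s) (hy : x + ℓ₀ • y ∈ s)
    (hℓ : ℓ ∈ Icc 0 ℓ₀) : x + ℓ • y ∈ s := by
  rcases hℓ.1.eq_or_lt with rfl | hℓ_pos
  · simpa using hx
  have hℓ₀ : ℓ₀ ≠ 0 := (hℓ_pos.trans_le hℓ.2).ne'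
  have h := hs.add_smul_mem hx hy (t := ℓ / ℓ₀)
    ⟨div_nonneg hℓ.1 (hℓ.1.trans hℓ.2), div_le_one_of_le₀ hℓ.2 (hℓ.1.trans hℓ.2)⟩
  rwa [smul_smul, div_mul_cancel₀ _ hℓ₀] at h

theorem rpow_eq_rpow_mul_pow {x : ℝ} (hx : 0 < x) {e e₀ : ℝ} (n : ℕ) (h : e = e₀ + n) :
    x ^ e = x ^ e₀ * x ^ n := by
  rw [h, rpow_add_natCast hx.ne']

theorem norm_add_smul_sq_div_two {E : Type*} [NormedAddCommGroup E] [InnerProductSpace ℝ E]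
    (m n : E) (ℓ : ℝ) :
    ‖m + ℓ • n‖ ^ 2 / 2 = ‖m‖ ^ 2 / 2 + ⟪m, n⟫ * ℓ + ‖n‖ ^ 2 / 2 * ℓ ^ 2 := by
  rw [norm_add_sq_real, real_inner_smul_right, norm_smul, mul_pow, Real.norm_eq_abs, sq_abs]
  ring

def admissibleDensity (b : ℝ) : Set ℝ := {ρ | 0 < ρ ∧ b * ρ < 1}

theorem isOpen_admissibleDensity (b : ℝ) : IsOpen (admissibleDensity b) :=
  (isOpen_lt continuous_const continuous_id).inter
    (isOpen_lt (continuous_const.mul continuous_id) continuous_const)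

theorem convex_admissibleDensity (b : ℝ) : Convex ℝ (admissibleDensity b) :=
  (convex_Ioi 0).inter (convex_halfSpace_lt (LinearMap.mulLeft ℝ b).isLinear 1)

theorem hasDerivAt_rpow_mul_one_sub_rpow {b ρ : ℝ} (e₁ e₂ : ℝ) (hρ : ρ ∈ admissibleDensity b) :
    HasDerivAt (fun x => x ^ e₁ * (1 - b * x) ^ e₂)
      (e₁ * ρ ^ (e₁ - 1) * (1 - b * ρ) ^ e₂ - b * e₂ * ρ ^ e₁ * (1 - b * ρ) ^ (e₂ - 1)) ρ := by
  have hl : HasDerivAt (fun x => 1 - b * x) (-b) ρ := by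
    simpa using (hasDerivAt_const_mul b).const_sub 1
  refine ((hasDerivAt_id ρ).rpow_const (p := e₁) (Or.inl hρ.1.ne')).mul
    (hl.rpow_const (p := e₂) (Or.inl (sub_pos.2 hρ.2).ne')) |>.congr_deriv ?_
  simp only [id]
  ring

noncomputable def covolumeTerm (b γ ρ : ℝ) : ℝ := ρ ^ (γ + 1) * (1 - b * ρ) ^ (1 - γ)

theorem hasDerivAt_covolumeTerm {b γ ρ : ℝ} (hρ : ρ ∈ admissibleDensity b) :
    HasDerivAt (covolumeTerm b γ)
      ((γ + 1) * ρ ^ γ * (1 - b * ρ) ^ (1 - γ) + b * (γ - 1) * ρ ^ (γ + 1) * (1 - b * ρ) ^ (-γ))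
      ρ := by
  refine (hasDerivAt_rpow_mul_one_sub_rpow _ _ hρ).congr_deriv ?_
  rw [show γ + 1 - 1 = γ by ring, show 1 - γ - 1 = -γ by ring]
  ring

theorem hasDerivAt_deriv_covolumeTerm {b γ ρ : ℝ} (hρ : ρ ∈ admissibleDensity b) :
    HasDerivAt (deriv (covolumeTerm b γ))
      (γ * (γ + 1) * ρ ^ (γ - 1) * (1 - b * ρ) ^ (1 - γ)
        + 2 * b * (γ ^ 2 - 1) * ρ ^ γ * (1 - b * ρ) ^ (-γ)
        + b ^ 2 * γ * (γ - 1) * ρ ^ (γ + 1) * (1 - b * ρ) ^ (-γ - 1)) ρ := by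
  refine hasDerivAt_deriv_of_forall_hasDerivAt (isOpen_admissibleDensity b)
    (fun _ hy => hasDerivAt_covolumeTerm hy) ?_ hρ
  convert ((hasDerivAt_rpow_mul_one_sub_rpow γ (1 - γ) hρ).const_mul (γ + 1)).add
    ((hasDerivAt_rpow_mul_one_sub_rpow (γ + 1) (-γ) hρ).const_mul (b * (γ - 1))) using 1
  · ext x
    simp only [Pi.add_apply]
    ring
  · rw [show γ + 1 - 1 = γ by ring, show 1 - γ - 1 = -γ by ring]
    ring

theorem hasDerivAt_deriv_deriv_covolumeTerm {b γ ρ : ℝ} (hρ : ρ ∈ admissibleDensity b) :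
    HasDerivAt (deriv (deriv (covolumeTerm b γ)))
      (γ * (γ ^ 2 - 1) * ρ ^ (γ - 2) * (1 - b * ρ) ^ (-γ - 2)) ρ := by
  refine hasDerivAt_deriv_of_forall_hasDerivAt (isOpen_admissibleDensity b)
    (fun _ hy => hasDerivAt_deriv_covolumeTerm hy) ?_ hρ
  convert (((hasDerivAt_rpow_mul_one_sub_rpow (γ - 1) (1 - γ) hρ).const_mul (γ * (γ + 1))).add
    ((hasDerivAt_rpow_mul_one_sub_rpow γ (-γ) hρ).const_mul (2 * b * (γ ^ 2 - 1)))).add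
    ((hasDerivAt_rpow_mul_one_sub_rpow (γ + 1) (-γ - 1) hρ).const_mul (b ^ 2 * γ * (γ - 1)))
    using 1
  · ext x
    simp only [Pi.add_apply]
    ring
  have hρ' : 0 < 1 - b * ρ := sub_pos.2 hρ.2
  -- Factor out `ρ ^ (γ - 2) * (1 - b * ρ) ^ (-γ - 2)`; the remaining polynomial is `γ (γ² - 1)`.
  rw [show γ - 1 - 1 = γ - 2 by ring, show 1 - γ - 1 = -γ by ring, show γ + 1 - 1 = γ by ring,
    show -γ - 1 - 1 = -γ - 2 by ring,
    rpow_eq_rpow_mul_pow hρ.1 1 (show γ - 1 = γ - 2 + (1 : ℕ) by push_cast; ring),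
    rpow_eq_rpow_mul_pow hρ.1 2 (show γ = γ - 2 + (2 : ℕ) by push_cast; ring),
    rpow_eq_rpow_mul_pow hρ.1 3 (show γ + 1 = γ - 2 + (3 : ℕ) by push_cast; ring),
    rpow_eq_rpow_mul_pow hρ' 3 (show 1 - γ = -γ - 2 + (3 : ℕ) by push_cast; ring),
    rpow_eq_rpow_mul_pow hρ' 2 (show -γ = -γ - 2 + (2 : ℕ) by push_cast; ring),
    rpow_eq_rpow_mul_pow hρ' 1 (show -γ - 1 = -γ - 2 + (1 : ℕ) by push_cast; ring)]
  ring

theorem covolumeTerm_third_deriv_nonneg {b γ ρ : ℝ} (hγ : 1 ≤ γ)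
    (hρ : ρ ∈ admissibleDensity b) :
    0 ≤ γ * (γ ^ 2 - 1) * ρ ^ (γ - 2) * (1 - b * ρ) ^ (-γ - 2) :=
  mul_nonneg (mul_nonneg (mul_nonneg (by linarith) (by nlinarith)) (rpow_nonneg hρ.1.le _))
    (rpow_nonneg (sub_pos.2 hρ.2).le _)

theorem hasDerivAt_deriv_deriv_quadratic_sub_covolumeTerm {b γ : ℝ} (A B C c a q : ℝ) {ℓ : ℝ}
    (hℓ : a + ℓ * q ∈ admissibleDensity b) :
    HasDerivAt (deriv (deriv fun ℓ => A + B * ℓ + C * ℓ ^ 2 - c * covolumeTerm b γ (a + ℓ * q)))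
      (-(c * q ^ 3 * (γ * (γ ^ 2 - 1) * (a + ℓ * q) ^ (γ - 2) * (1 - b * (a + ℓ * q)) ^ (-γ - 2))))
      ℓ := by
  have hS : IsOpen ((fun ℓ => a + ℓ * q) ⁻¹' admissibleDensity b) :=
    (isOpen_admissibleDensity b).preimage (by fun_prop)
  have hline (x : ℝ) : HasDerivAt (fun ℓ => a + ℓ * q) q x := (hasDerivAt_mul_const q).const_add a
  have h₁ (x : ℝ) (hx : a + x * q ∈ admissibleDensity b) :
      HasDerivAt (fun ℓ => A + B * ℓ + C * ℓ ^ 2 - c * covolumeTerm b γ (a + ℓ * q))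
        (B + 2 * C * x - c * (deriv (covolumeTerm b γ) (a + x * q) * q)) x := by
    have hquad : HasDerivAt (fun ℓ => A + B * ℓ + C * ℓ ^ 2) (B + 2 * C * x) x :=
      (((hasDerivAt_const_mul B).const_add A).add ((hasDerivAt_pow 2 x).const_mul C)).congr_deriv
        (by push_cast; ring)
    have hg := (hasDerivAt_covolumeTerm (γ := γ) hx).differentiableAt.hasDerivAt.comp x (hline x)
    exact hquad.sub (hg.const_mul c)
  have h₂ (x : ℝ) (hx : a + x * q ∈ admissibleDensity b) :
      HasDerivAt (deriv fun ℓ => A + B * ℓ + C * ℓ ^ 2 - c * covolumeTerm b γ (a + ℓ * q))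
        (2 * C - c * (deriv (deriv (covolumeTerm b γ)) (a + x * q) * q * q)) x := by
    have hg := (hasDerivAt_deriv_covolumeTerm (γ := γ) hx).differentiableAt.hasDerivAt.comp x
      (hline x)
    exact hasDerivAt_deriv_of_forall_hasDerivAt hS h₁
      (((hasDerivAt_const_mul (2 * C)).const_add B).sub ((hg.mul_const q).const_mul c)) hx
  have hg := (hasDerivAt_deriv_deriv_covolumeTerm (γ := γ) hℓ).comp ℓ (hline ℓ)
  refine (hasDerivAt_deriv_of_forall_hasDerivAt hS h₂
    ((((hg.mul_const q).mul_const q).const_mul c).const_sub (2 * C)) hℓ).congr_deriv ?_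
  ring

theorem sub_covolumeTerm_add_smul_eq {E : Type*} [NormedAddCommGroup E]
    [InnerProductSpace ℝ E] (b γ c : ℝ) (u p : ℝ × E × ℝ) (ℓ : ℝ) :
    (u + ℓ • p).1 * (u + ℓ • p).2.2 - ‖(u + ℓ • p).2.1‖ ^ 2 / 2
      - c * (u + ℓ • p).1 ^ (γ + 1) * (1 - b * (u + ℓ • p).1) ^ (1 - γ)
    = (u.1 * u.2.2 - ‖u.2.1‖ ^ 2 / 2) + (p.1 * u.2.2 + u.1 * p.2.2 - ⟪u.2.1, p.2.1⟫) * ℓ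
      + (p.1 * p.2.2 - ‖p.2.1‖ ^ 2 / 2) * ℓ ^ 2 - c * covolumeTerm b γ (u.1 + ℓ * p.1) := by
  simp only [covolumeTerm, Prod.fst_add, Prod.snd_add, Prod.smul_fst, Prod.smul_snd, smul_eq_mul,
    norm_add_smul_sq_div_two]
  ring

theorem stmt5_general (d : ℕ) (b γ c : ℝ) (hγ : 1 < γ)
    (Φ : ℝ × EuclideanSpace ℝ (Fin d) × ℝ → ℝ)
    (hΦ : ∀ v : ℝ × EuclideanSpace ℝ (Fin d) × ℝ,
      Φ v = v.1 * v.2.2 - ‖v.2.1‖ ^ 2 / 2 -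
        c * v.1 ^ (γ + 1) * (1 - b * v.1) ^ (1 - γ))
    (u p : ℝ × EuclideanSpace ℝ (Fin d) × ℝ) (ℓ₀ : ℝ)
    (hu : 0 < u.1 ∧ b * u.1 < 1)
    (hup : 0 < (u + ℓ₀ • p).1 ∧ b * (u + ℓ₀ • p).1 < 1)
    (f : ℝ → ℝ) (hf : ∀ ℓ, f ℓ = Φ (u + ℓ • p)) :
    (∀ ℓ ∈ Set.Icc 0 ℓ₀,
      iteratedDeriv 3 f ℓ = p.1 ^ 3 *
        (-(c * γ * (γ ^ 2 - 1)) * ((u + ℓ • p).1) ^ (γ - 2) *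
          (1 - b * (u + ℓ • p).1) ^ (-γ - 2))) ∧
    (0 ≤ c →
      MonotoneOn (iteratedDeriv 2 f) (Set.Icc 0 ℓ₀) ∨
      AntitoneOn (iteratedDeriv 2 f) (Set.Icc 0 ℓ₀)) := by
  simp only [Prod.fst_add, Prod.smul_fst, smul_eq_mul] at hup ⊢
  have hρ (ℓ : ℝ) (hℓ : ℓ ∈ Icc 0 ℓ₀) : u.1 + ℓ * p.1 ∈ admissibleDensity b :=
    (convex_admissibleDensity b).add_smul_mem_of_mem_Icc hu hup hℓ
  have hf_line : f = _ := funext fun ℓ => (hf ℓ).trans ((hΦ _).trans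
    (sub_covolumeTerm_add_smul_eq b γ c u p ℓ))
  have hf''' (ℓ : ℝ) (hℓ : ℓ ∈ Icc 0 ℓ₀) : HasDerivAt (iteratedDeriv 2 f)
      (p.1 ^ 3 * (-(c * γ * (γ ^ 2 - 1)) * (u.1 + ℓ * p.1) ^ (γ - 2) *
        (1 - b * (u.1 + ℓ * p.1)) ^ (-γ - 2))) ℓ := by
    rw [iteratedDeriv_succ, iteratedDeriv_one, hf_line]
    exact (hasDerivAt_deriv_deriv_quadratic_sub_covolumeTerm _ _ _ _ _ _ (hρ ℓ hℓ)).congr_deriv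
      (by ring)
  refine ⟨fun ℓ hℓ =>
    (congrFun (iteratedDeriv_succ (n := 2) (f := f)) ℓ).trans (hf''' ℓ hℓ).deriv, fun hc => ?_⟩
  refine monotoneOn_or_antitoneOn_of_hasDerivAt (convex_Icc 0 ℓ₀) hf'''
    (forall_nonneg_or_forall_nonpos_pow_three_mul _ fun ℓ hℓ => ?_)
  have := mul_nonneg hc (covolumeTerm_third_deriv_nonneg hγ.le (hρ ℓ hℓ))
  linarith

/-- The third derivative of `f(ℓ) = Φ(u + ℓp)` with
`Φ(ρ,m,E) = ρE - ‖m‖²/2 - c ρ^{γ+1}(1-bρ)^{1-γ}` equals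
`ρ_p³ ∂ρ³Φ(u+ℓp)`; in particular, if `c ≥ 0` the sign of `f'''` is constant
on `[0,ℓ₀]`, so `f''` is monotone there. -/
theorem stmt5 (d : ℕ) (b γ c : ℝ) (hd : 1 ≤ d) (hb : 0 ≤ b) (hγ : 1 < γ)
    (Φ : ℝ × EuclideanSpace ℝ (Fin d) × ℝ → ℝ)
    (hΦ : ∀ v : ℝ × EuclideanSpace ℝ (Fin d) × ℝ,
      Φ v = v.1 * v.2.2 - ‖v.2.1‖ ^ 2 / 2 -
        c * v.1 ^ (γ + 1) * (1 - b * v.1) ^ (1 - γ))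
    (u p : ℝ × EuclideanSpace ℝ (Fin d) × ℝ) (ℓ₀ : ℝ) (hℓ₀ : 0 < ℓ₀)
    (hu : 0 < u.1 ∧ b * u.1 < 1)
    (hup : 0 < (u + ℓ₀ • p).1 ∧ b * (u + ℓ₀ • p).1 < 1)
    (f : ℝ → ℝ) (hf : ∀ ℓ, f ℓ = Φ (u + ℓ • p)) :
    (∀ ℓ ∈ Set.Icc 0 ℓ₀,
      iteratedDeriv 3 f ℓ = p.1 ^ 3 *
        (-(c * γ * (γ ^ 2 - 1)) * ((u + ℓ • p).1) ^ (γ - 2) *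
          (1 - b * (u + ℓ • p).1) ^ (-γ - 2))) ∧
    (0 ≤ c →
      MonotoneOn (iteratedDeriv 2 f) (Set.Icc 0 ℓ₀) ∨
      AntitoneOn (iteratedDeriv 2 f) (Set.Icc 0 ℓ₀)) :=
  stmt5_general d b γ c hγ Φ hΦ u p ℓ₀ hu hup f hf
end

section
/- Let m_i > 0, let {d_{ij}}_{j ∈ I\{i\}} be nonnegative reals, let τ > 0 satisfy τ·Σ_{j∈I\{i\}} 2d_{ij}/m_i ≤ 1, and let U_i, {U_j}, and flux values be given with d_{ij} > 0. Define Ū_{ij} := ½(U_i + U_j) - (1/(2d_{ij}))(f(U_j) - f(U_i))·c_{ij} where Σ_{j∈I} c_{ij} = 0. Then the update U_i^{new} := U_i - (τ/m_i)[Σ_{j∈I} f(U_j)·c_{ij} - Σ_{j∈I\{i\}} d_{ij}(U_j - U_i)] satisfies U_i^{new} = (1 - Σ_{j∈I\{i\}} 2τd_{ij}/m_i)·U_i + Σ_{j∈I\{i\}} (2τd_{ij}/m_i)·Ū_{ij}; in particular U_i^{new} is a convex combination of U_i and the bar states {Ū_{ij}}. -/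
/-!
With `a j = 2τ d j / m`, the right-hand side is `U i + ∑ a j • (Ubar j - U i)`, and each term
`a j • (Ubar j - U i)` equals `(τ / m) • (d j • (U j - U i) - (f (U j) - f (U i)) (c j))`.
Summing, the terms `f (U i) (c j)` add up to `f (U i) (∑ c j) = 0`, which leaves the update.
-/

open Finset

section GraphViscosity

variable {ι R W V : Type*}

theorem sum_erase_apply_sub_eq_sum_apply [DecidableEq ι] [CommRing R]
    [AddCommGroup W] [Module R W] [AddCommGroup V] [Module R V]
    (I : Finset ι) (i : ι) (F : ι → W →ₗ[R] V) (c : ι → W)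
    (hc : ∑ j ∈ I, c j = 0) :
    ∑ j ∈ I.erase i, (F j (c j) - F i (c j)) = ∑ j ∈ I, F j (c j) := by
  have hcentre : ∑ j ∈ I, F i (c j) = 0 := by rw [← map_sum, hc, map_zero]
  rw [sum_erase I (sub_self _), sum_sub_distrib, hcentre, sub_zero]

theorem one_sub_sum_smul_add_sum_smul [Ring R] [AddCommGroup V] [Module R V]
    (s : Finset ι) (a : ι → R) (u : V) (b : ι → V) :
    (1 - ∑ j ∈ s, a j) • u + ∑ j ∈ s, a j • b j = u + ∑ j ∈ s, a j • (b j - u) := by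
  simp only [smul_sub, sub_smul, one_smul, sum_sub_distrib, sum_smul]
  abel

theorem smul_barState_sub [AddCommGroup V] [Module ℝ V] {τ m δ : ℝ} (hδ : δ ≠ 0)
    (u v w : V) :
    (2 * τ * δ / m) • ((1 / 2 : ℝ) • (u + v) - (1 / (2 * δ)) • w - u) =
      (τ / m) • (δ • (v - u) - w) := by
  match_scalars <;> field_simp
  ring

end GraphViscosity

theorem stmt15_general {V : Type*} [AddCommGroup V] [Module ℝ V]
    {ι : Type*} [DecidableEq ι] (dd : ℕ)
    (I : Finset ι) (i : ι)
    (m τ : ℝ) (hm : 0 < m) (hτ : 0 < τ)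
    (d : ι → ℝ) (hd : ∀ j ∈ I.erase i, 0 < d j)
    (hCFL : τ * ∑ j ∈ I.erase i, 2 * d j / m ≤ 1)
    (U : ι → V) (f : V → (Fin dd → ℝ) →ₗ[ℝ] V) (c : ι → Fin dd → ℝ)
    (hc : ∑ j ∈ I, c j = 0)
    (Ubar : ι → V)
    (hUbar : ∀ j ∈ I.erase i, Ubar j =
      (1 / 2 : ℝ) • (U i + U j) -
        (1 / (2 * d j)) • (f (U j) (c j) - f (U i) (c j)))
    (Unew : V)
    (hUnew : Unew = U i - (τ / m) •
      (∑ j ∈ I, f (U j) (c j) - ∑ j ∈ I.erase i, d j • (U j - U i))) :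
    Unew = (1 - ∑ j ∈ I.erase i, 2 * τ * d j / m) • U i +
      ∑ j ∈ I.erase i, (2 * τ * d j / m) • Ubar j ∧
    0 ≤ 1 - ∑ j ∈ I.erase i, 2 * τ * d j / m ∧
    ∀ j ∈ I.erase i, 0 ≤ 2 * τ * d j / m := by
  refine ⟨?_, ?_, fun j hj ↦ by have := hd j hj; positivity⟩
  · have hterm : ∀ j ∈ I.erase i, (2 * τ * d j / m) • (Ubar j - U i) =
        (τ / m) • (d j • (U j - U i) - (f (U j) (c j) - f (U i) (c j))) := fun j hj ↦ by
      rw [hUbar j hj, smul_barState_sub (hd j hj).ne']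
    rw [one_sub_sum_smul_add_sum_smul, sum_congr rfl hterm, ← smul_sum, sum_sub_distrib,
      sum_erase_apply_sub_eq_sum_apply I i (fun j ↦ f (U j)) c hc, hUnew]
    module
  · have hsum : ∑ j ∈ I.erase i, 2 * τ * d j / m = τ * ∑ j ∈ I.erase i, 2 * d j / m := by
      rw [mul_sum]
      exact sum_congr rfl fun j _ ↦ by ring
    linarith

/-- The first-order graph-viscosity update is a convex combination of the local
state `U i` and the bar states `Ū_{ij}`: the algebraic identity
`U_i^{new} = (1 - Σ 2τd_{ij}/m_i) U_i + Σ (2τd_{ij}/m_i) Ū_{ij}`, with all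
coefficients nonnegative under the CFL condition. -/
theorem stmt15 {V : Type*} [AddCommGroup V] [Module ℝ V]
    {ι : Type*} [DecidableEq ι] (dd : ℕ)
    (I : Finset ι) (i : ι) (hi : i ∈ I)
    (m τ : ℝ) (hm : 0 < m) (hτ : 0 < τ)
    (d : ι → ℝ) (hd : ∀ j ∈ I.erase i, 0 < d j)
    (hCFL : τ * ∑ j ∈ I.erase i, 2 * d j / m ≤ 1)
    (U : ι → V) (f : V → (Fin dd → ℝ) →ₗ[ℝ] V) (c : ι → Fin dd → ℝ)
    (hc : ∑ j ∈ I, c j = 0)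
    (Ubar : ι → V)
    (hUbar : ∀ j ∈ I.erase i, Ubar j =
      (1 / 2 : ℝ) • (U i + U j) -
        (1 / (2 * d j)) • (f (U j) (c j) - f (U i) (c j)))
    (Unew : V)
    (hUnew : Unew = U i - (τ / m) •
      (∑ j ∈ I, f (U j) (c j) - ∑ j ∈ I.erase i, d j • (U j - U i))) :
    Unew = (1 - ∑ j ∈ I.erase i, 2 * τ * d j / m) • U i +
      ∑ j ∈ I.erase i, (2 * τ * d j / m) • Ubar j ∧
    0 ≤ 1 - ∑ j ∈ I.erase i, 2 * τ * d j / m ∧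
    ∀ j ∈ I.erase i, 0 ≤ 2 * τ * d j / m :=
  stmt15_general dd I i m τ hm hτ d hd hCFL U f c hc Ubar hUbar Unew hUnew
end
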